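/- Let P be an r-dual graded graph such that P_{[0,m]} has no multiple edges, and let x ≠ y be two elements of rank m. If z is an element of rank m+1 that covers both x and y, then there exists an element w of rank m−1 that is covered by both x and y, and moreover m(x,z) = m(y,z) = m(w,x) = m(w,y) = 1. -/
import Mathlib


open scoped BigOperators

/-- A graded (multi)graph: a rank function with finite fibers, a unique element of
rank `0`, and symmetric edge multiplicities supported between consecutive ranks. -/
structure GradedGraph where
  V : Type
  rank : V → ℕ
  mult : V → V → ℕ
  mult_comm : ∀ x y, mult x y = mult y x
  rankFin : ∀ n : ℕ, {x | rank x = n}.Finite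
  zero_unique : ∃! x, rank x = 0
  mult_rank : ∀ x y, mult x y ≠ 0 → rank y = rank x + 1 ∨ rank x = rank y + 1

namespace GradedGraph

/-- `Ux = Σ_{y : rank y = rank x + 1} m(x,y)·y`, on the basis vector `x`. -/
noncomputable def upOf (G : GradedGraph) (x : G.V) : G.V →₀ ℂ :=
  ∑ y ∈ (G.rankFin (G.rank x + 1)).toFinset, (G.mult x y : ℂ) • Finsupp.single y 1

/-- `Dy = Σ_{x : rank x = rank y − 1} m(x,y)·x`, on the basis vector `y`. -/
noncomputable def downOf (G : GradedGraph) (y : G.V) : G.V →₀ ℂ :=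
  ∑ x ∈ (G.rankFin (G.rank y - 1)).toFinset, (G.mult x y : ℂ) • Finsupp.single x 1

/-- The up operator `U` on `ℂP`. -/
noncomputable def up (G : GradedGraph) : (G.V →₀ ℂ) →ₗ[ℂ] (G.V →₀ ℂ) :=
  Finsupp.lsum ℂ fun x => LinearMap.id.smulRight (G.upOf x)

/-- The down operator `D` on `ℂP`. -/
noncomputable def down (G : GradedGraph) : (G.V →₀ ℂ) →ₗ[ℂ] (G.V →₀ ℂ) :=
  Finsupp.lsum ℂ fun y => LinearMap.id.smulRight (G.downOf y)

/-- The unique element `0̂` of rank zero. -/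
noncomputable def bot (G : GradedGraph) : G.V := G.zero_unique.exists.choose

/-- `e(x) = ⟨Uⁿ 0̂, x⟩` for `x` of rank `n`: the number of upward paths from `0̂`
to `x`, counted with products of edge multiplicities. -/
noncomputable def eCoeff (G : GradedGraph) (x : G.V) : ℂ :=
  ((G.up ^ (G.rank x)) (Finsupp.single G.bot 1)) x

/-- `y` covers `x`. -/
def Covers (G : GradedGraph) (x y : G.V) : Prop :=
  G.rank y = G.rank x + 1 ∧ 1 ≤ G.mult x y

/-- `P_{[0,m]}` has no multiple edges. -/
def NoMultipleEdgesUpTo (G : GradedGraph) (m : ℕ) : Prop :=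
  ∀ x y, G.rank x ≤ m → G.rank y ≤ m → G.mult x y ≤ 1

end GradedGraph

/-- `P` is an `r`-dual graded graph: `DU − UD = r·I`. -/
def IsDualGradedGraph (G : GradedGraph) (r : ℕ) : Prop :=
  G.down ∘ₗ G.up - G.up ∘ₗ G.down = (r : ℂ) • LinearMap.id

namespace GradedGraph

lemma up_single (G : GradedGraph) (u : G.V) : G.up (Finsupp.single u 1) = G.upOf u := by
  simp [up]

lemma down_single (G : GradedGraph) (u : G.V) : G.down (Finsupp.single u 1) = G.downOf u := by
  simp [down]

lemma upOf_apply (G : GradedGraph) (u v : G.V) :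
    G.upOf u v = if G.rank v = G.rank u + 1 then (G.mult u v : ℂ) else 0 := by
  classical
  have h : G.upOf u v = ∑ y ∈ (G.rankFin (G.rank u + 1)).toFinset,
      (if y = v then (G.mult u y : ℂ) else 0) := by
    rw [upOf, Finsupp.finset_sum_apply]
    refine Finset.sum_congr rfl fun w _ => ?_
    simp [Finsupp.single_apply]
  rw [h, Finset.sum_ite_eq']
  simp [Set.Finite.mem_toFinset]

lemma downOf_apply (G : GradedGraph) (u v : G.V) :
    G.downOf u v = if G.rank v = G.rank u - 1 then (G.mult v u : ℂ) else 0 := by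
  classical
  have h : G.downOf u v = ∑ y ∈ (G.rankFin (G.rank u - 1)).toFinset,
      (if y = v then (G.mult y u : ℂ) else 0) := by
    rw [downOf, Finsupp.finset_sum_apply]
    refine Finset.sum_congr rfl fun w _ => ?_
    simp [Finsupp.single_apply]
  rw [h, Finset.sum_ite_eq']
  simp [Set.Finite.mem_toFinset]

/-- The key commutation identity in `ℕ`, off-diagonal case. -/
lemma key (G : GradedGraph) (r : ℕ) (hG : IsDualGradedGraph G r)
    {u v : G.V} (hn : 1 ≤ G.rank u) (hv : G.rank v = G.rank u) (huv : v ≠ u) :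
    ∑ z ∈ (G.rankFin (G.rank u + 1)).toFinset, G.mult u z * G.mult v z =
    ∑ w ∈ (G.rankFin (G.rank u - 1)).toFinset, G.mult w u * G.mult w v := by
  classical
  have h0 := DFunLike.congr_fun (DFunLike.congr_fun hG (Finsupp.single u 1)) v
  have hDU : (G.down (G.up (Finsupp.single u 1))) v =
      ∑ z ∈ (G.rankFin (G.rank u + 1)).toFinset, (G.mult u z : ℂ) * G.mult v z := by
    rw [up_single, upOf, map_sum]
    rw [Finsupp.finset_sum_apply]
    refine Finset.sum_congr rfl fun z hz => ?_
    have hrz : G.rank z = G.rank u + 1 := by simpa [Set.Finite.mem_toFinset] using hz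
    rw [map_smul, Finsupp.smul_apply, down_single, downOf_apply]
    rw [hrz]
    simp [hv, smul_eq_mul]
  have hUD : (G.up (G.down (Finsupp.single u 1))) v =
      ∑ w ∈ (G.rankFin (G.rank u - 1)).toFinset, (G.mult w u : ℂ) * G.mult w v := by
    rw [down_single, downOf, map_sum]
    rw [Finsupp.finset_sum_apply]
    refine Finset.sum_congr rfl fun w hw => ?_
    have hrw : G.rank w = G.rank u - 1 := by simpa [Set.Finite.mem_toFinset] using hw
    rw [map_smul, Finsupp.smul_apply, up_single, upOf_apply]
    rw [hrw, Nat.sub_add_cancel hn]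
    simp [hv, smul_eq_mul]
  rw [LinearMap.sub_apply, LinearMap.coe_comp, LinearMap.coe_comp] at h0
  simp only [Function.comp_apply, Finsupp.sub_apply, LinearMap.smul_apply,
    LinearMap.id_apply] at h0
  rw [hDU, hUD] at h0
  rw [Finsupp.smul_apply, Finsupp.single_apply, if_neg (by exact fun h => huv h.symm)] at h0
  have hC : (∑ z ∈ (G.rankFin (G.rank u + 1)).toFinset, (G.mult u z : ℂ) * G.mult v z) =
      ∑ w ∈ (G.rankFin (G.rank u - 1)).toFinset, (G.mult w u : ℂ) * G.mult w v :=
    sub_eq_zero.mp (by simpa using h0)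
  exact_mod_cast (by push_cast; exact hC :
    ((∑ z ∈ (G.rankFin (G.rank u + 1)).toFinset, G.mult u z * G.mult v z : ℕ) : ℂ) =
    ((∑ w ∈ (G.rankFin (G.rank u - 1)).toFinset, G.mult w u * G.mult w v : ℕ) : ℂ))

lemma two_of_sum {α : Type*} (s : Finset α) (f : α → ℕ) (h1 : ∀ a ∈ s, f a ≤ 1)
    (h2 : 2 ≤ ∑ a ∈ s, f a) : ∃ a ∈ s, ∃ b ∈ s, a ≠ b ∧ 1 ≤ f a ∧ 1 ≤ f b := by
  classical
  have hle : ∑ a ∈ s, f a ≤ ∑ a ∈ s, (if 1 ≤ f a then 1 else 0) := by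
    refine Finset.sum_le_sum fun a ha => ?_
    by_cases h : 1 ≤ f a
    · simpa [h] using h1 a ha
    · simp [h]; omega
  have h3 : ∑ a ∈ s, (if 1 ≤ f a then 1 else 0) = (s.filter fun a => 1 ≤ f a).card :=
    (Finset.card_filter _ _).symm
  have hcard : 1 < (s.filter fun a => 1 ≤ f a).card := by omega
  obtain ⟨a, ha, b, hb, hab⟩ := Finset.one_lt_card.mp hcard
  rw [Finset.mem_filter] at ha hb
  exact ⟨a, ha.1, b, hb.1, hab, ha.2, hb.2⟩

/-- No two distinct elements of rank `n` (with `1 ≤ n ≤ m`) have common-lower-cover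
count exceeding one. -/
lemma common_le_one (G : GradedGraph) (r : ℕ) (hG : IsDualGradedGraph G r)
    (m : ℕ) (hsimple : G.NoMultipleEdgesUpTo m) :
    ∀ n, 1 ≤ n → n ≤ m → ∀ u v : G.V, G.rank u = n → G.rank v = n → u ≠ v →
      ∑ w ∈ (G.rankFin (n - 1)).toFinset, G.mult w u * G.mult w v ≤ 1 := by
  classical
  intro n
  induction n using Nat.strong_induction_on with
  | _ n IH =>
    intro hn1 hnm u v hu hv huv
    by_contra hcon
    push_neg at hcon
    have hterms : ∀ w ∈ (G.rankFin (n - 1)).toFinset, G.mult w u * G.mult w v ≤ 1 := by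
      intro w hw
      have hrw : G.rank w = n - 1 := by simpa [Set.Finite.mem_toFinset] using hw
      have h1 := hsimple w u (by omega) (by omega)
      have h2 := hsimple w v (by omega) (by omega)
      simpa using Nat.mul_le_mul h1 h2
    obtain ⟨w₁, hw₁, w₂, hw₂, hne, hf₁, hf₂⟩ :=
      two_of_sum _ _ hterms (by omega)
    have hrw₁ : G.rank w₁ = n - 1 := by simpa [Set.Finite.mem_toFinset] using hw₁
    have hrw₂ : G.rank w₂ = n - 1 := by simpa [Set.Finite.mem_toFinset] using hw₂
    have hm₁u : 1 ≤ G.mult w₁ u := Nat.pos_of_ne_zero (fun h => by simp [h] at hf₁)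
    have hm₁v : 1 ≤ G.mult w₁ v := Nat.pos_of_ne_zero (fun h => by simp [h] at hf₁)
    have hm₂u : 1 ≤ G.mult w₂ u := Nat.pos_of_ne_zero (fun h => by simp [h] at hf₂)
    have hm₂v : 1 ≤ G.mult w₂ v := Nat.pos_of_ne_zero (fun h => by simp [h] at hf₂)
    rcases Nat.lt_or_ge n 2 with h2 | h2
    · -- n = 1 : both w's have rank 0, hence are equal
      have hn : n = 1 := by omega
      obtain ⟨b, _, hb⟩ := G.zero_unique
      exact hne ((hb w₁ (by omega)).trans (hb w₂ (by omega)).symm)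
    · -- n ≥ 2 : apply key to w₁, w₂
      have hkey := G.key r hG (u := w₁) (v := w₂) (by omega) (by omega) hne.symm
      have hup : ∑ z ∈ (G.rankFin (G.rank w₁ + 1)).toFinset,
          G.mult w₁ z * G.mult w₂ z ≥ 2 := by
        have hsub : ({u, v} : Finset G.V) ⊆ (G.rankFin (G.rank w₁ + 1)).toFinset := by
          intro t ht
          rcases Finset.mem_insert.mp ht with h | h
          · subst h; simp [Set.Finite.mem_toFinset]; omega
          · rw [Finset.mem_singleton] at h; subst h
            simp [Set.Finite.mem_toFinset]; omega
        have := Finset.sum_le_sum_of_subset hsub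
          (f := fun t => G.mult w₁ t * G.mult w₂ t)
        rw [Finset.sum_pair huv] at this
        have : G.mult w₁ u * G.mult w₂ u + G.mult w₁ v * G.mult w₂ v ≤ _ := this
        nlinarith [hm₁u, hm₁v, hm₂u, hm₂v]
      have hdn : ∑ t ∈ (G.rankFin (G.rank w₁ - 1)).toFinset,
          G.mult t w₁ * G.mult t w₂ ≤ 1 := by
        have := IH (n - 1) (by omega) (by omega) (by omega) w₁ w₂ hrw₁ hrw₂ hne
        have heq : G.rank w₁ - 1 = n - 1 - 1 := by omega
        rw [heq]; exact this
      omega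

end GradedGraph

/-- Lemma 2.1(b). Let `P` be an `r`-dual graded graph such that
`P_{[0,m]}` has no multiple edges, and let `x ≠ y` be two elements of rank `m`.
If `z` is an element of rank `m+1` covering both `x` and `y`, then there exists an
element `w` of rank `m−1` covered by both `x` and `y`, and moreover
`m(x,z) = m(y,z) = m(w,x) = m(w,y) = 1`. -/
theorem dual_graded_lower_bound_exists (G : GradedGraph) (r : ℕ) (hr : 0 < r)
    (hG : IsDualGradedGraph G r) (m : ℕ) (hsimple : G.NoMultipleEdgesUpTo m)
    (x y : G.V) (hx : G.rank x = m) (hy : G.rank y = m) (hxy : x ≠ y)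
    (z : G.V) (hz : G.rank z = m + 1) (hxz : G.Covers x z) (hyz : G.Covers y z) :
    ∃ w : G.V, G.rank w = m - 1 ∧ G.Covers w x ∧ G.Covers w y ∧
      G.mult x z = 1 ∧ G.mult y z = 1 ∧ G.mult w x = 1 ∧ G.mult w y = 1 := by
  classical
  have hm : 1 ≤ m := by
    by_contra h
    obtain ⟨b, _, hb⟩ := G.zero_unique
    exact hxy ((hb x (by omega)).trans (hb y (by omega)).symm)
  have hkey := G.key r hG (u := x) (v := y) (by omega) (by omega) (Ne.symm hxy)
  rw [hx] at hkey
  have hzmem : z ∈ (G.rankFin (m + 1)).toFinset := by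
    simp [Set.Finite.mem_toFinset, hz]
  have hterm : 1 ≤ G.mult x z * G.mult y z := Nat.mul_pos hxz.2 hyz.2
  have hSge : G.mult x z * G.mult y z ≤
      ∑ z' ∈ (G.rankFin (m + 1)).toFinset, G.mult x z' * G.mult y z' :=
    Finset.single_le_sum (f := fun t => G.mult x t * G.mult y t) (fun i _ => Nat.zero_le _) hzmem
  have hKle : ∑ w ∈ (G.rankFin (m - 1)).toFinset, G.mult w x * G.mult w y ≤ 1 :=
    G.common_le_one r hG m hsimple m hm le_rfl x y hx hy hxy
  have hprod : G.mult x z * G.mult y z = 1 := le_antisymm (by omega) hterm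
  have hxz1 : G.mult x z = 1 := Nat.eq_one_of_mul_eq_one_right hprod
  have hyz1 : G.mult y z = 1 := Nat.eq_one_of_mul_eq_one_left hprod
  have hKge : 1 ≤ ∑ w ∈ (G.rankFin (m - 1)).toFinset, G.mult w x * G.mult w y := by omega
  obtain ⟨w, hwmem, hwne⟩ := Finset.exists_ne_zero_of_sum_ne_zero
    (by omega : (∑ w ∈ (G.rankFin (m - 1)).toFinset, G.mult w x * G.mult w y) ≠ 0)
  have hrw : G.rank w = m - 1 := by simpa [Set.Finite.mem_toFinset] using hwmem
  have hwx : 1 ≤ G.mult w x := Nat.pos_of_ne_zero (fun h => by simp [h] at hwne)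
  have hwy : 1 ≤ G.mult w y := Nat.pos_of_ne_zero (fun h => by simp [h] at hwne)
  have hwx1 : G.mult w x = 1 :=
    le_antisymm (hsimple w x (by omega) (by omega)) hwx
  have hwy1 : G.mult w y = 1 :=
    le_antisymm (hsimple w y (by omega) (by omega)) hwy
  exact ⟨w, hrw, ⟨by omega, hwx⟩, ⟨by omega, hwy⟩, hxz1, hyz1, hwx1, hwy1⟩
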